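/- arXiv:2508.07471 — 2 statements merged into one kernel-verified Lean document; each statement's English description precedes it below -/
import Mathlib

section
/- Let A be an n×n real matrix with A^{m+1} = 0, let c ∈ ℝ, a ∈ ℝ with a ≠ 0, γ ∈ ℝ, and B = 𝟙𝟙ᵀ + c·A. Set p_j = Σ_{k=0}^{m} (c/a)^k·(A^k𝟙)_j for j = 1,…,n, and suppose −a + Σ_{j=1}^n p_j ≠ 0. Then the vector x with x_j = p_j·Γ, where Γ = γ/(−a + Σ_{j=1}^n p_j), satisfies B·x = γ·𝟙 + a·x. Moreover, if det(B − aI) ≠ 0 then necessarily −a + Σ_{j=1}^n p_j ≠ 0, so x is the unique solution of B·x = γ·𝟙 + a·x. -/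
/-!
`p` is the truncated Neumann series `∑ₖ (c/a)ᵏ Aᵏ 𝟙 = (1 - (c/a) A)⁻¹ 𝟙`, exact because `A` is
nilpotent, so `c A p = a p - a 𝟙`. As the all-ones block sends `p` to `(∑ⱼ pⱼ) 𝟙`, this gives
`(B - a I) p = (-a + ∑ⱼ pⱼ) 𝟙`: the right-hand side `γ 𝟙` is reached by scaling `p` by `Γ`.
If `B - a I` is invertible then `-a + ∑ⱼ pⱼ = 0` would force `p = 0`, whence `a = 0`.
-/

open Finset

namespace Matrix

variable {R ι : Type*} [Fintype ι]

theorem one_sub_smul_mulVec_geom_sum_of_pow_eq_zero [CommRing R] [DecidableEq ι]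
    {A : Matrix ι ι R} {m : ℕ} (hA : A ^ (m + 1) = 0) (t : R) (v : ι → R) :
    (1 - t • A) *ᵥ ∑ k ∈ range (m + 1), t ^ k • (A ^ k *ᵥ v) = v := by
  have hsum : ∑ k ∈ range (m + 1), t ^ k • (A ^ k *ᵥ v)
      = (∑ k ∈ range (m + 1), (t • A) ^ k) *ᵥ v := by
    simp only [sum_mulVec, smul_pow, smul_mulVec]
  rw [hsum, mulVec_mulVec, mul_neg_geom_sum, smul_pow, hA, smul_zero, sub_zero, one_mulVec]

theorem of_one_mulVec [NonAssocSemiring R] (v : ι → R) :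
    (of fun (_ : ι) (_ : ι) => (1 : R)) *ᵥ v = (∑ j, v j) • fun _ => (1 : R) := by
  ext i
  simp [mulVec, dotProduct]

theorem mulVec_eq_smul_add_smul_iff [CommRing R] [DecidableEq ι] (B : Matrix ι ι R)
    (a γ : R) (y : ι → R) :
    B *ᵥ y = γ • (fun _ => (1 : R)) + a • y ↔ (B - a • 1) *ᵥ y = γ • fun _ => (1 : R) := by
  rw [sub_mulVec, smul_mulVec, one_mulVec, sub_eq_iff_eq_add]

/-- Its `j`-th entry is the localized path polynomial `p_j^G(z)` when `A` is the adjacency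
matrix of a DAG `G` whose longest path has length `m`. -/
def localizedPathVector [CommSemiring R] [DecidableEq ι] (A : Matrix ι ι R) (m : ℕ) (z : R) :
    ι → R :=
  ∑ k ∈ range (m + 1), z ^ k • (A ^ k *ᵥ fun _ => (1 : R))

theorem of_one_add_smul_sub_smul_one_mulVec_localizedPathVector {K : Type*} [Field K]
    [DecidableEq ι] {A : Matrix ι ι K} {m : ℕ} (hA : A ^ (m + 1) = 0) {a : K} (ha : a ≠ 0)
    (c : K) :
    (of (fun _ _ => (1 : K)) + c • A - a • 1) *ᵥ localizedPathVector A m (c / a)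
      = (-a + ∑ j, localizedPathVector A m (c / a) j) • fun _ => (1 : K) := by
  set p := localizedPathVector A m (c / a)
  have hneumann : a • p - c • (A *ᵥ p) = a • fun _ => (1 : K) := by
    have h : (1 - (c / a) • A) *ᵥ p = fun _ => (1 : K) :=
      one_sub_smul_mulVec_geom_sum_of_pow_eq_zero hA (c / a) _
    replace h := congrArg (a • ·) h
    simpa only [sub_mulVec, one_mulVec, smul_mulVec, smul_sub, smul_smul,
      mul_div_cancel₀ c ha] using h
  rw [sub_mulVec, add_mulVec, of_one_mulVec, smul_mulVec, smul_mulVec, one_mulVec, add_smul,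
    neg_smul, ← hneumann]
  abel

end Matrix

open Matrix in
/-- DAG Lemma: the system `B·x = γ𝟙 + a·x`, `B = 𝟙𝟙ᵀ + c·A` with `A` nilpotent, is solved
by `x_j = p_j·Γ` with `p_j = Σ_k (c/a)^k (A^k 𝟙)_j` and `Γ = γ/(−a + Σ_j p_j)`;
if `det(B − aI) ≠ 0` then `−a + Σ_j p_j ≠ 0` and `x` is the unique solution. -/
theorem stmt_10 (n m : ℕ) (A : Matrix (Fin n) (Fin n) ℝ) (hnil : A ^ (m + 1) = 0)
    (c a γ : ℝ) (ha : a ≠ 0)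
    (B : Matrix (Fin n) (Fin n) ℝ)
    (hB : B = Matrix.of (fun _ _ => (1 : ℝ)) + c • A)
    (p : Fin n → ℝ)
    (hp : p = ∑ k ∈ Finset.range (m + 1), (c / a) ^ k • (A ^ k).mulVec (fun _ => (1 : ℝ)))
    (Γ : ℝ) (hΓ : Γ = γ / (-a + ∑ j, p j))
    (x : Fin n → ℝ) (hx : ∀ j, x j = p j * Γ) :
    ((-a + ∑ j, p j ≠ 0) →
      B.mulVec x = γ • (fun _ => (1 : ℝ)) + a • x) ∧
    ((B - a • 1).det ≠ 0 →
      (-a + ∑ j, p j ≠ 0) ∧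
      ∀ y : Fin n → ℝ, B.mulVec y = γ • (fun _ => (1 : ℝ)) + a • y → y = x) := by
  have hkey : (B - a • 1) *ᵥ p = (-a + ∑ j, p j) • fun _ => (1 : ℝ) := by
    subst hB hp
    exact of_one_add_smul_sub_smul_one_mulVec_localizedPathVector hnil ha c
  have hxp : x = Γ • p := funext fun j => (hx j).trans (mul_comm _ _)
  have solves (hne : -a + ∑ j, p j ≠ 0) : (B - a • 1) *ᵥ x = γ • fun _ => (1 : ℝ) := by
    rw [hxp, mulVec_smul, hkey, smul_smul, hΓ, div_mul_cancel₀ _ hne]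
  refine ⟨fun hne => (mulVec_eq_smul_add_smul_iff B a γ x).2 (solves hne), fun hdet => ?_⟩
  have hinj : Function.Injective (B - a • 1).mulVec :=
    mulVec_injective_iff_isUnit.2 ((isUnit_iff_isUnit_det _).2 hdet.isUnit)
  have hne : -a + ∑ j, p j ≠ 0 := by
    intro h0
    have hp0 : p = 0 := hinj (by rw [hkey, h0, zero_smul, mulVec_zero])
    simp only [hp0, Pi.zero_apply, sum_const_zero, add_zero, neg_eq_zero] at h0
    exact ha h0
  exact ⟨hne, fun y hy =>
    hinj (((mulVec_eq_smul_add_smul_iff B a γ y).1 hy).trans (solves hne).symm)⟩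
end

section
/- Let G be a directed acyclic graph on {1,…,n}, n ≥ 2, with adjacency matrix A (A_{ij} = 1 iff j→i) and maximum path length m, and localized path polynomials p_i^G(z) = Σ_{k=0}^{m} (A^k𝟙)_i·z^k. Let W be the CTLN weight matrix of G with parameters δ > 0, 0 < ε < δ/(1+δ), θ > 0, and set β = −(ε+δ)/(1+δ). If every real root r of every p_i^G (i = 1,…,n) satisfies r ≤ β (equivalently, (ε+δ)/(1+δ) ≤ −r_G, where r_G is the greatest real root among all the p_i^G; the hypothesis holds vacuously if no p_i^G has a real root), then there exists x ∈ ℝ^n with x ≥ 0 componentwise and W·x = −θ·𝟙; i.e., the CTLN is balanced. -/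
/-!
Evaluate the vector of localized path polynomials at `β`: `v = ∑ₖ βᵏ Aᵏ 𝟙`. Since `A` is
nilpotent, `v = 𝟙 + β A v`, and the choice of `β` makes `(ε + δ) A v = -(1 + δ)(v - 𝟙)`. As
`W = (ε + δ) A + (1 + δ)(I - J)` with `J` the all-ones matrix, `W v = (1 + δ)(1 - ∑ v) 𝟙` is a
constant vector. The root hypothesis gives `v ≥ 0` (each `p_i` is `1` at `0` and cannot change
sign on `[β, 0]`), and then `v = 𝟙 + β A v` with `-1 < β ≤ 0` forces `∑ v > 1`, so a positive
multiple of `v` is the balanced state.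
-/

open Matrix Finset

theorem nonneg_of_forall_root_le {f : ℝ → ℝ} {a b : ℝ} (hab : a ≤ b)
    (hf : ContinuousOn f (Set.Icc a b)) (hb : 0 ≤ f b)
    (hroots : ∀ r ∈ Set.Icc a b, f r = 0 → r ≤ a) : 0 ≤ f a := by
  by_contra! ha
  obtain ⟨r, hr, hfr⟩ := intermediate_value_Icc hab hf ⟨ha.le, hb⟩
  obtain rfl : r = a := le_antisymm (hroots r hr hfr) hr.1
  exact ha.ne hfr

section PathPolynomial

variable {ι R : Type*} [Fintype ι] [DecidableEq ι] [CommRing R]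

/-- The vector `(p_i(z))ᵢ` of localized path polynomials, written as `(∑ₖ (zA)ᵏ) 𝟙`. -/
def pathPolyVec (A : Matrix ι ι R) (m : ℕ) (z : R) : ι → R :=
  (∑ k ∈ range (m + 1), (z • A) ^ k) *ᵥ 1

theorem pathPolyVec_apply (A : Matrix ι ι R) (m : ℕ) (z : R) (i : ι) :
    pathPolyVec A m z i = ∑ k ∈ range (m + 1), z ^ k * (A ^ k *ᵥ fun _ => 1) i := by
  simp only [pathPolyVec, sum_mulVec, smul_pow, smul_mulVec, Finset.sum_apply, Pi.smul_apply,
    smul_eq_mul]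
  rfl

theorem pathPolyVec_zero (A : Matrix ι ι R) (m : ℕ) : pathPolyVec A m 0 = 1 := by
  simp [pathPolyVec, Finset.sum_range_succ', zero_pow]

theorem pathPolyVec_eq_one_add_smul_mulVec {A : Matrix ι ι R} {m : ℕ} (hnil : A ^ (m + 1) = 0)
    (z : R) : pathPolyVec A m z = 1 + z • A *ᵥ pathPolyVec A m z := by
  have hpow : (z • A) ^ (m + 1) = 0 := by rw [smul_pow, hnil, smul_zero]
  have hgeom := congrArg (· *ᵥ (1 : ι → R)) (mul_neg_geom_sum (z • A) (m + 1))
  rw [hpow, sub_zero, ← mulVec_mulVec, sub_mulVec, one_mulVec, one_mulVec, smul_mulVec] at hgeom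
  exact sub_eq_iff_eq_add.mp hgeom

theorem continuous_pathPolyVec_apply (A : Matrix ι ι ℝ) (m : ℕ) (i : ι) :
    Continuous fun z => pathPolyVec A m z i := by
  simp only [pathPolyVec_apply]
  fun_prop

theorem pathPolyVec_nonneg {A : Matrix ι ι ℝ} {m : ℕ} {β : ℝ} (hβ : β ≤ 0) {i : ι}
    (hroots : ∀ r, pathPolyVec A m r i = 0 → r ≤ β) : 0 ≤ pathPolyVec A m β i :=
  nonneg_of_forall_root_le hβ (continuous_pathPolyVec_apply A m i).continuousOn
    (by simp [pathPolyVec_zero]) fun r _ => hroots r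

end PathPolynomial

section Weights

variable {ι : Type*} [Fintype ι] [DecidableEq ι] {A : Matrix ι ι ℝ} {v : ι → ℝ}

theorem mulVec_apply_le_sum_sub (hA : ∀ i j, A i j ≤ 1) (hdiag : ∀ i, A i i = 0) (hv : 0 ≤ v)
    (i : ι) : (A *ᵥ v) i ≤ ∑ j, v j - v i := by
  rw [← add_sum_erase _ v (mem_univ i), add_sub_cancel_left, mulVec, dotProduct,
    ← add_sum_erase _ _ (mem_univ i), hdiag, zero_mul, zero_add]
  exact sum_le_sum fun j _ => mul_le_of_le_one_left (hv j) (hA i j)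

/-- If `v = 𝟙 + β A v` then each `vᵢ ≥ 1 + β (∑ v - vᵢ)`; summing, `∑ v ≥ n + β (n - 1) ∑ v`. -/
theorem one_lt_sum_of_eq_one_add_smul_mulVec (hcard : 2 ≤ Fintype.card ι) {β : ℝ}
    (hβ : -1 < β) (hβ0 : β ≤ 0) (hA : ∀ i j, A i j ≤ 1) (hdiag : ∀ i, A i i = 0) (hv : 0 ≤ v)
    (hfix : v = 1 + β • A *ᵥ v) : 1 < ∑ i, v i := by
  set s := ∑ i, v i
  have hlower : ∀ i, 1 + β * (s - v i) ≤ v i := fun i => by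
    have hi := congrFun hfix i
    simp only [Pi.add_apply, Pi.one_apply, Pi.smul_apply, smul_eq_mul] at hi
    nlinarith [mulVec_apply_le_sum_sub hA hdiag hv i]
  have hsum : ∑ i, (1 + β * (s - v i)) ≤ s := sum_le_sum fun i _ => hlower i
  simp only [sum_add_distrib, ← mul_sum, sum_sub_distrib, sum_const, card_univ, nsmul_eq_mul,
    mul_one] at hsum
  have hn : (2 : ℝ) ≤ Fintype.card ι := by exact_mod_cast hcard
  by_contra! hs
  have hβn : 0 ≤ -β * (Fintype.card ι - 1) := mul_nonneg (by linarith) (by linarith)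
  nlinarith [mul_nonneg (sub_nonneg.2 hs) hβn]

end Weights

section CTLN

variable {ι : Type*} [DecidableEq ι] {E : ι → ι → Prop} [DecidableRel E] {A W : Matrix ι ι ℝ}
  {ε δ : ℝ}

theorem ctln_weight_eq (hloop : ∀ i, ¬ E i i) (hA : ∀ i j, A i j = if E j i then 1 else 0)
    (hW : ∀ i j, W i j = if i = j then 0 else if E j i then -1 + ε else -1 - δ) :
    W = (ε + δ) • A + (1 + δ) • (1 - of fun _ _ => 1) := by
  ext i j
  by_cases hij : i = j
  · subst hij
    simp [hW, hA, hloop]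
  · by_cases he : E j i <;> simp [hW, hA, hij, he, one_apply_ne hij] <;> ring

theorem ctln_mulVec_apply [Fintype ι] (hloop : ∀ i, ¬ E i i)
    (hA : ∀ i j, A i j = if E j i then 1 else 0)
    (hW : ∀ i j, W i j = if i = j then 0 else if E j i then -1 + ε else -1 - δ)
    (v : ι → ℝ) (i : ι) :
    (W *ᵥ v) i = (ε + δ) * (A *ᵥ v) i + (1 + δ) * (v i - ∑ j, v j) := by
  rw [ctln_weight_eq hloop hA hW]
  simp only [add_mulVec, smul_mulVec, sub_mulVec, one_mulVec]
  simp [mulVec, dotProduct]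

end CTLN

/-- Balanced State Theorem for DAGs: if every real root of every localized path
polynomial `p_i^G` is at most `β = −(ε+δ)/(1+δ)`, then the CTLN is balanced. -/
theorem stmt_16 (n : ℕ) (hn : 2 ≤ n)
    (E : Fin n → Fin n → Prop) [DecidableRel E]
    (hacyc : ∀ i, ¬ Relation.TransGen E i i)
    (A : Matrix (Fin n) (Fin n) ℝ)
    (hA : ∀ i j, A i j = if E j i then 1 else 0)
    (m : ℕ) (hnil : A ^ (m + 1) = 0)
    (δ ε θ : ℝ) (hδ : 0 < δ) (hε : 0 < ε) (hεδ : ε < δ / (1 + δ)) (hθ : 0 < θ)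
    (W : Matrix (Fin n) (Fin n) ℝ)
    (hW : ∀ i j, W i j = if i = j then 0 else if E j i then -1 + ε else -1 - δ)
    (β : ℝ) (hβ : β = -(ε + δ) / (1 + δ))
    (hroots : ∀ i : Fin n, ∀ r : ℝ,
      (∑ k ∈ Finset.range (m + 1), r ^ k * ((A ^ k).mulVec (fun _ => (1 : ℝ))) i) = 0 →
        r ≤ β) :
    ∃ x : Fin n → ℝ, (∀ i, 0 ≤ x i) ∧ ∀ i, W.mulVec x i = -θ := by
  have hloop : ∀ i, ¬ E i i := fun i h => hacyc i (.single h)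
  have hδ1 : 0 < 1 + δ := by linarith
  have hε1 : ε < 1 := hεδ.trans ((div_lt_one hδ1).2 (by linarith))
  have hβδ : β * (1 + δ) = -(ε + δ) := by rw [hβ]; field_simp
  have hβ0 : β ≤ 0 := by nlinarith
  have hβ1 : -1 < β := by nlinarith
  set v := pathPolyVec A m β
  have hv : 0 ≤ v := fun i =>
    pathPolyVec_nonneg hβ0 fun r hr => hroots i r (by rwa [pathPolyVec_apply] at hr)
  have hfix : v = 1 + β • A *ᵥ v := pathPolyVec_eq_one_add_smul_mulVec hnil β
  have hs : 1 < ∑ i, v i :=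
    one_lt_sum_of_eq_one_add_smul_mulVec (by simpa using hn) hβ1 hβ0
      (fun i j => by rw [hA]; split_ifs <;> norm_num) (fun i => by simp [hA, hloop]) hv hfix
  have hWv : ∀ i, (W *ᵥ v) i = (1 + δ) * (1 - ∑ j, v j) := fun i => by
    have hi := congrFun hfix i
    simp only [Pi.add_apply, Pi.one_apply, Pi.smul_apply, smul_eq_mul] at hi
    rw [ctln_mulVec_apply hloop hA hW]
    linear_combination (1 + δ) * hi + (A *ᵥ v) i * hβδ
  have hs1 : 0 < ∑ j, v j - 1 := by linarith
  refine ⟨(θ / ((1 + δ) * (∑ j, v j - 1))) • v, fun i => ?_, fun i => ?_⟩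
  · exact mul_nonneg (div_pos hθ (mul_pos hδ1 hs1)).le (hv i)
  · rw [mulVec_smul, Pi.smul_apply, hWv, smul_eq_mul]
    field_simp
    ring
end
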